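/- arXiv:1202.4144 — 2 statements merged into one kernel-verified Lean document; each statement's English description precedes it below -/
import Mathlib

section
/- Let DS' be a set of signed formulas of C1. Then DS' is satisfiable if and only if there exists a C1 downward saturated set DS'' such that DS' ⊆ DS''. -/
/-- Formulas of the paraconsistent logic C1, built from propositional atoms
with the connectives ¬, ∧, ∨, →. -/
inductive C1Formula : Type
  | atom : ℕ → C1Formula
  | neg  : C1Formula → C1Formula
  | and  : C1Formula → C1Formula → C1Formula
  | or   : C1Formula → C1Formula → C1Formula
  | imp  : C1Formula → C1Formula → C1Formula
  deriving DecidableEq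

namespace C1Formula

/-- The consistency connective: ∘A := ¬(A ∧ ¬A). -/
def cons (A : C1Formula) : C1Formula := neg (and A (neg A))

end C1Formula

/-- A C1 bivaluation: a function from formulas to {0,1} satisfying
da Costa's valuation clauses for C1. -/
structure C1Valuation : Type where
  v : C1Formula → Fin 2
  and_iff : ∀ A B : C1Formula, v (A.and B) = 1 ↔ (v A = 1 ∧ v B = 1)
  or_iff  : ∀ A B : C1Formula, v (A.or B) = 1 ↔ (v A = 1 ∨ v B = 1)
  imp_iff : ∀ A B : C1Formula, v (A.imp B) = 1 ↔ (v A = 0 ∨ v B = 1)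
  neg_val : ∀ A : C1Formula, v A.neg = 0 → v A = 1
  negneg_val : ∀ A : C1Formula, v A.neg.neg = 1 → v A = 1
  cons_val : ∀ A : C1Formula, v A.cons = 1 → (v A = 0 ∨ v A.neg = 0)
  cons_and : ∀ A B : C1Formula, v (A.and B).cons = 0 → (v A.cons = 0 ∨ v B.cons = 0)
  cons_or  : ∀ A B : C1Formula, v (A.or B).cons = 0 → (v A.cons = 0 ∨ v B.cons = 0)
  cons_imp : ∀ A B : C1Formula, v (A.imp B).cons = 0 → (v A.cons = 0 ∨ v B.cons = 0)

/-- Γ ⊨_{C1} B : every C1-valuation assigning 1 to all members of Γ assigns 1 to B. -/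
def C1Valid (Γ : Set C1Formula) (B : C1Formula) : Prop :=
  ∀ w : C1Valuation, (∀ A ∈ Γ, w.v A = 1) → w.v B = 1
/-- Signed formulas: T A or F A. -/
inductive SignedFormula : Type
  | T : C1Formula → SignedFormula
  | F : C1Formula → SignedFormula
  deriving DecidableEq

namespace SignedFormula

/-- The conjugate of a signed formula: the conjugate of T A is F A and vice versa. -/
def conj : SignedFormula → SignedFormula
  | T A => F A
  | F A => T A

end SignedFormula

open SignedFormula

/-- Extension of a C1-valuation to signed formulas: v(T A) = v(A), v(F A) = 1 - v(A). -/
def C1Valuation.sv (w : C1Valuation) : SignedFormula → Fin 2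
  | .T A => w.v A
  | .F A => 1 - w.v A

/-- A set of signed formulas is satisfiable if some C1-valuation assigns 1 to all its members. -/
def SatSet (S : Set SignedFormula) : Prop :=
  ∃ w : C1Valuation, ∀ sf ∈ S, w.sv sf = 1

/-- A set DS of signed formulas is downward saturated for the C1 KE system:
(i) no signed formula together with its conjugate;
(ii) closure under all linear C1 KE rules;
(iii) whenever the major premiss of a 2-premiss rule is in DS, the minor premiss
or its conjugate is in DS. -/
structure DownwardSaturated (DS : Set SignedFormula) : Prop where
  no_conj : ∀ sf ∈ DS, sf.conj ∉ DS
  -- (ii) 1-premiss rules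
  f_imp : ∀ A B : C1Formula, F (A.imp B) ∈ DS → T A ∈ DS ∧ F B ∈ DS
  t_and : ∀ A B : C1Formula, T (A.and B) ∈ DS → T A ∈ DS ∧ T B ∈ DS
  f_or  : ∀ A B : C1Formula, F (A.or B) ∈ DS → F A ∈ DS ∧ F B ∈ DS
  f_neg : ∀ A : C1Formula, F A.neg ∈ DS → T A ∈ DS
  t_negneg : ∀ A : C1Formula, T A.neg.neg ∈ DS → T A ∈ DS
  -- (ii) 2-premiss rules
  t_imp1 : ∀ A B : C1Formula, T (A.imp B) ∈ DS → T A ∈ DS → T B ∈ DS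
  t_imp2 : ∀ A B : C1Formula, T (A.imp B) ∈ DS → F B ∈ DS → F A ∈ DS
  f_and1 : ∀ A B : C1Formula, F (A.and B) ∈ DS → T A ∈ DS → F B ∈ DS
  f_and2 : ∀ A B : C1Formula, F (A.and B) ∈ DS → T B ∈ DS → F A ∈ DS
  t_or1  : ∀ A B : C1Formula, T (A.or B) ∈ DS → F A ∈ DS → T B ∈ DS
  t_or2  : ∀ A B : C1Formula, T (A.or B) ∈ DS → F B ∈ DS → T A ∈ DS
  t_neg  : ∀ A : C1Formula, T A.neg ∈ DS → T A.cons ∈ DS → F A ∈ DS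
  f_cons_and1 : ∀ A B : C1Formula, F (A.and B).cons ∈ DS → T A.cons ∈ DS → F B.cons ∈ DS
  f_cons_and2 : ∀ A B : C1Formula, F (A.and B).cons ∈ DS → T B.cons ∈ DS → F A.cons ∈ DS
  f_cons_or1  : ∀ A B : C1Formula, F (A.or B).cons ∈ DS → T A.cons ∈ DS → F B.cons ∈ DS
  f_cons_or2  : ∀ A B : C1Formula, F (A.or B).cons ∈ DS → T B.cons ∈ DS → F A.cons ∈ DS
  f_cons_imp1 : ∀ A B : C1Formula, F (A.imp B).cons ∈ DS → T A.cons ∈ DS → F B.cons ∈ DS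
  f_cons_imp2 : ∀ A B : C1Formula, F (A.imp B).cons ∈ DS → T B.cons ∈ DS → F A.cons ∈ DS
  -- (iii) minor premiss or its conjugate present whenever the major premiss is
  t_imp1_minor : ∀ A B : C1Formula, T (A.imp B) ∈ DS → (T A ∈ DS ∨ F A ∈ DS)
  t_imp2_minor : ∀ A B : C1Formula, T (A.imp B) ∈ DS → (F B ∈ DS ∨ T B ∈ DS)
  f_and1_minor : ∀ A B : C1Formula, F (A.and B) ∈ DS → (T A ∈ DS ∨ F A ∈ DS)
  f_and2_minor : ∀ A B : C1Formula, F (A.and B) ∈ DS → (T B ∈ DS ∨ F B ∈ DS)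
  t_or1_minor  : ∀ A B : C1Formula, T (A.or B) ∈ DS → (F A ∈ DS ∨ T A ∈ DS)
  t_or2_minor  : ∀ A B : C1Formula, T (A.or B) ∈ DS → (F B ∈ DS ∨ T B ∈ DS)
  t_neg_minor  : ∀ A : C1Formula, T A.neg ∈ DS → (T A.cons ∈ DS ∨ F A.cons ∈ DS)
  f_cons_and1_minor : ∀ A B : C1Formula, F (A.and B).cons ∈ DS → (T A.cons ∈ DS ∨ F A.cons ∈ DS)
  f_cons_and2_minor : ∀ A B : C1Formula, F (A.and B).cons ∈ DS → (T B.cons ∈ DS ∨ F B.cons ∈ DS)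
  f_cons_or1_minor  : ∀ A B : C1Formula, F (A.or B).cons ∈ DS → (T A.cons ∈ DS ∨ F A.cons ∈ DS)
  f_cons_or2_minor  : ∀ A B : C1Formula, F (A.or B).cons ∈ DS → (T B.cons ∈ DS ∨ F B.cons ∈ DS)
  f_cons_imp1_minor : ∀ A B : C1Formula, F (A.imp B).cons ∈ DS → (T A.cons ∈ DS ∨ F A.cons ∈ DS)
  f_cons_imp2_minor : ∀ A B : C1Formula, F (A.imp B).cons ∈ DS → (T B.cons ∈ DS ∨ F B.cons ∈ DS)

/-!
Soundness: under a C1-valuation every linear KE rule is truth-preserving and every minor premiss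
is true or false, so the signed formulas a valuation makes true form a downward saturated set.

Completeness is a Hintikka lemma. From a downward saturated `DS` read off a truth predicate: an
atom `p` is true iff `T p ∈ DS`, the binary connectives are classical, and `¬A` is true iff `A` is
false or `T ¬A ∈ DS`. Induction on formulas shows it agrees with every member of `DS`. The C1
clauses for `¬¬` and `∘` then come from the rules `T¬¬`, `T¬` and `F∘(A ⊘ B)` of `DS`: a false
`∘A` with `A` true forces `T ¬A ∈ DS`, hence `F ∘A ∈ DS` by the branching condition of `T¬`.
-/

lemma Fin.two_eq_zero_iff_ne_one {x : Fin 2} : x = 0 ↔ x ≠ 1 := by omega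

@[simp]
lemma Fin.two_ite_eq_one_iff {p : Prop} [Decidable p] :
    (if p then (1 : Fin 2) else 0) = 1 ↔ p := by
  split_ifs <;> simp_all


namespace C1Valuation

variable (w : C1Valuation)

lemma sv_T_eq_one (A : C1Formula) : w.sv (T A) = 1 ↔ w.v A = 1 := Iff.rfl

lemma sv_F_eq_one (A : C1Formula) : w.sv (F A) = 1 ↔ w.v A ≠ 1 := by
  change 1 - w.v A = 1 ↔ _
  omega

theorem downwardSaturated_setOf_sv_eq_one : DownwardSaturated {sf | w.sv sf = 1} := by
  have := w.and_iff; have := w.or_iff; have := w.imp_iff; have := w.neg_val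
  have := w.negneg_val; have := w.cons_val; have := w.cons_and; have := w.cons_or
  have := w.cons_imp
  simp only [Fin.two_eq_zero_iff_ne_one] at *
  constructor
  · rintro (A | A) <;> simp [sv_T_eq_one, sv_F_eq_one, conj]
  all_goals simp only [Set.mem_ofPred_eq, sv_T_eq_one, sv_F_eq_one]; grind

end C1Valuation

def canonicalTruth (DS : Set SignedFormula) : C1Formula → Prop
  | .atom n => T (.atom n) ∈ DS
  | .neg A => ¬canonicalTruth DS A ∨ T A.neg ∈ DS
  | .and A B => canonicalTruth DS A ∧ canonicalTruth DS B
  | .or A B => canonicalTruth DS A ∨ canonicalTruth DS B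
  | .imp A B => canonicalTruth DS A → canonicalTruth DS B

namespace DownwardSaturated

variable {DS : Set SignedFormula}

theorem canonicalTruth_agrees (h : DownwardSaturated DS) (A : C1Formula) :
    (T A ∈ DS → canonicalTruth DS A) ∧ (F A ∈ DS → ¬canonicalTruth DS A) := by
  induction A with
  | atom n => exact ⟨id, fun hF hT => h.no_conj _ hT hF⟩
  | neg A ih =>
    refine ⟨Or.inr, fun hF => ?_⟩
    rintro (hA | hT)
    · exact hA (ih.1 (h.f_neg A hF))
    · exact h.no_conj _ hT hF
  | and A B ihA ihB =>
    refine ⟨fun hT => ?_, fun hF ⟨hA, hB⟩ => ?_⟩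
    · exact ⟨ihA.1 (h.t_and A B hT).1, ihB.1 (h.t_and A B hT).2⟩
    · rcases h.f_and1_minor A B hF with hTA | hFA
      · exact ihB.2 (h.f_and1 A B hF hTA) hB
      · exact ihA.2 hFA hA
  | or A B ihA ihB =>
    refine ⟨fun hT => ?_, fun hF hAB => ?_⟩
    · rcases h.t_or1_minor A B hT with hFA | hTA
      · exact Or.inr (ihB.1 (h.t_or1 A B hT hFA))
      · exact Or.inl (ihA.1 hTA)
    · rcases hAB with hA | hB
      · exact ihA.2 (h.f_or A B hF).1 hA
      · exact ihB.2 (h.f_or A B hF).2 hB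
  | imp A B ihA ihB =>
    refine ⟨fun hT hA => ?_, fun hF hAB => ?_⟩
    · rcases h.t_imp1_minor A B hT with hTA | hFA
      · exact ihB.1 (h.t_imp1 A B hT hTA)
      · exact absurd hA (ihA.2 hFA)
    · exact ihB.2 (h.f_imp A B hF).2 (hAB (ihA.1 (h.f_imp A B hF).1))

theorem canonicalTruth_of_mem_T (h : DownwardSaturated DS) {A : C1Formula} (hA : T A ∈ DS) :
    canonicalTruth DS A :=
  (h.canonicalTruth_agrees A).1 hA

theorem not_canonicalTruth_of_mem_F (h : DownwardSaturated DS) {A : C1Formula} (hA : F A ∈ DS) :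
    ¬canonicalTruth DS A :=
  (h.canonicalTruth_agrees A).2 hA

theorem canonicalTruth_of_neg_neg (h : DownwardSaturated DS) {A : C1Formula}
    (hA : canonicalTruth DS A.neg.neg) : canonicalTruth DS A := by
  rcases hA with hnnA | hT
  · by_contra hnA
    exact hnnA (Or.inl hnA)
  · exact h.canonicalTruth_of_mem_T (h.t_negneg A hT)

theorem canonicalTruth_cons (h : DownwardSaturated DS) {A : C1Formula}
    (hA : canonicalTruth DS A.cons) :
    ¬canonicalTruth DS A ∨ ¬canonicalTruth DS A.neg := by
  rw [← not_and_or]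
  rintro ⟨hA₁, hnA | hTnA⟩
  · exact hnA hA₁
  rcases hA with hnc | hTc
  · exact hnc ⟨hA₁, Or.inr hTnA⟩
  · exact h.not_canonicalTruth_of_mem_F (h.t_neg A hTnA hTc) hA₁

theorem mem_F_cons (h : DownwardSaturated DS) {A : C1Formula}
    (hA : ¬canonicalTruth DS A.cons) : F A.cons ∈ DS := by
  simp only [C1Formula.cons, canonicalTruth, not_or, not_not] at hA
  obtain ⟨⟨hA₁, hnA | hTnA⟩, hTc⟩ := hA
  · exact absurd hA₁ hnA
  · exact (h.t_neg_minor A hTnA).resolve_left hTc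

theorem not_canonicalTruth_or_of_rule (h : DownwardSaturated DS) {X Y : C1Formula}
    (hX : T X ∈ DS ∨ F X ∈ DS) (hrule : T X ∈ DS → F Y ∈ DS) :
    ¬canonicalTruth DS X ∨ ¬canonicalTruth DS Y := by
  rcases hX with hTX | hFX
  · exact Or.inr (h.not_canonicalTruth_of_mem_F (hrule hTX))
  · exact Or.inl (h.not_canonicalTruth_of_mem_F hFX)

open Classical in
noncomputable def canonicalValuation (h : DownwardSaturated DS) : C1Valuation where
  v A := if canonicalTruth DS A then 1 else 0
  and_iff A B := by simp only [Fin.two_ite_eq_one_iff]; rfl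
  or_iff A B := by simp only [Fin.two_ite_eq_one_iff]; rfl
  imp_iff A B := by simp [canonicalTruth, imp_iff_not_or]
  neg_val A := by simpa using fun hnA => by_contra fun hA => hnA (Or.inl hA)
  negneg_val A := by simpa using h.canonicalTruth_of_neg_neg
  cons_val A := by simpa using h.canonicalTruth_cons
  cons_and A B hc := by
    have hF := h.mem_F_cons (by simpa using hc)
    simpa using h.not_canonicalTruth_or_of_rule (h.f_cons_and1_minor A B hF) (h.f_cons_and1 A B hF)
  cons_or A B hc := by
    have hF := h.mem_F_cons (by simpa using hc)
    simpa using h.not_canonicalTruth_or_of_rule (h.f_cons_or1_minor A B hF) (h.f_cons_or1 A B hF)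
  cons_imp A B hc := by
    have hF := h.mem_F_cons (by simpa using hc)
    simpa using h.not_canonicalTruth_or_of_rule (h.f_cons_imp1_minor A B hF) (h.f_cons_imp1 A B hF)

open Classical in
theorem canonicalValuation_v_eq_one (h : DownwardSaturated DS) (A : C1Formula) :
    h.canonicalValuation.v A = 1 ↔ canonicalTruth DS A :=
  Fin.two_ite_eq_one_iff

theorem satSet (h : DownwardSaturated DS) : SatSet DS := by
  refine ⟨h.canonicalValuation, ?_⟩
  rintro (A | A) hA
  · exact (h.canonicalValuation_v_eq_one A).2 (h.canonicalTruth_of_mem_T hA)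
  · rw [C1Valuation.sv_F_eq_one, Ne, h.canonicalValuation_v_eq_one]
    exact h.not_canonicalTruth_of_mem_F hA

end DownwardSaturated

theorem SatSet.mono {S S' : Set SignedFormula} (hS' : SatSet S') (hS : S ⊆ S') : SatSet S :=
  let ⟨w, hw⟩ := hS'
  ⟨w, fun sf hsf => hw sf (hS hsf)⟩

/-- A set DS' of signed formulas of C1 is satisfiable iff it is contained in
some C1 downward saturated set DS''. -/
theorem c1_sat_iff_subset_downward_saturated (DS' : Set SignedFormula) :
    SatSet DS' ↔ ∃ DS'' : Set SignedFormula, DownwardSaturated DS'' ∧ DS' ⊆ DS'' := by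
  constructor
  · rintro ⟨w, hw⟩
    exact ⟨{sf | w.sv sf = 1}, w.downwardSaturated_setOf_sv_eq_one, hw⟩
  · rintro ⟨DS'', hDS'', hsub⟩
    exact hDS''.satSet.mono hsub
end

section
/- (Validity of the fifth problem family Φ⁵) For every n ≥ 1, if A₁, …, A_{n+1}, B₁, …, B_n are pairwise distinct propositional atoms, then the sequent with premises ∘A₁; ⋀_{i=1}^n A_i; ⋀_{i=1}^n [A_{n+1} → ((A_i ∨ B_i) → ∘A_{i+1})]; and (⋀_{i=1}^n ∘A_i) → ¬A_{n+1}, and conclusion ¬¬¬A_{n+1}, is C1-valid: every C1-valuation assigning 1 to all four premises assigns 1 to ¬¬¬A_{n+1}. Here ∘C abbreviates ¬(C ∧ ¬C). -/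
/-- Iterated conjunction ⋀_{i=1}^n f(i) (left-associated, meaningful for n ≥ 1). -/
def iterAnd (f : ℕ → C1Formula) : ℕ → C1Formula
  | 0 => f 0
  | 1 => f 1
  | n + 2 => (iterAnd f (n + 1)).and (f (n + 2))

/-- Iterated disjunction ⋁_{i=1}^n f(i) (left-associated, meaningful for n ≥ 1). -/
def iterOr (f : ℕ → C1Formula) : ℕ → C1Formula
  | 0 => f 0
  | 1 => f 1
  | n + 2 => (iterOr f (n + 1)).or (f (n + 2))

/-!
Suppose ¬¬¬A_{n+1} fails. By the clauses for ¬ this forces A_{n+1}, so the third premise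
together with A_i (second premise) yields ∘A_{i+1} for every i ≤ n; with ∘A₁ all of
∘A₁, …, ∘A_{n+1} hold. The fourth premise then gives ¬A_{n+1}, and A_{n+1}, ¬A_{n+1} contradict
the consistency of A_{n+1}.
-/

namespace C1Valuation

variable (w : C1Valuation) {A B : C1Formula}

lemma v_mp (hAB : w.v (A.imp B) = 1) (hA : w.v A = 1) : w.v B = 1 :=
  ((w.imp_iff A B).1 hAB).resolve_left (by simp [hA])

lemma v_eq_one_of_v_neg_neg_neg_ne_one (h : w.v A.neg.neg.neg ≠ 1) : w.v A = 1 :=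
  w.negneg_val A (w.neg_val _ (by omega))

lemma v_neg_eq_zero_of_v_cons (hc : w.v A.cons = 1) (hA : w.v A = 1) : w.v A.neg = 0 :=
  (w.cons_val A hc).resolve_left (by simp [hA])

lemma v_iterAnd_eq_one_iff (f : ℕ → C1Formula) {n : ℕ} (hn : 1 ≤ n) :
    w.v (iterAnd f n) = 1 ↔ ∀ i ∈ Finset.Icc 1 n, w.v (f i) = 1 := by
  induction n, hn using Nat.le_induction with
  | base => simp [iterAnd]
  | succ m hm ih =>
    obtain ⟨k, rfl⟩ : ∃ k, m = k + 1 := ⟨m - 1, by omega⟩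
    rw [iterAnd, w.and_iff, ih, ← Finset.insert_Icc_right_eq_Icc_add_one (b := k + 1) (by omega),
      Finset.forall_mem_insert, and_comm]
    rfl

end C1Valuation

theorem fifth_family_valid_general (n : ℕ) (hn : 1 ≤ n) (A B : ℕ → ℕ)
    (w : C1Valuation)
    (hP1 : w.v ((C1Formula.atom (A 1)).cons) = 1)
    (hP2 : w.v (iterAnd (fun i => C1Formula.atom (A i)) n) = 1)
    (hP3 : w.v (iterAnd (fun i =>
        (C1Formula.atom (A (n + 1))).imp
          (((C1Formula.atom (A i)).or (C1Formula.atom (B i))).imp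
            ((C1Formula.atom (A (i + 1))).cons))) n) = 1)
    (hP4 : w.v ((iterAnd (fun i => (C1Formula.atom (A i)).cons) n).imp
        ((C1Formula.atom (A (n + 1))).neg)) = 1) :
    w.v (((C1Formula.atom (A (n + 1))).neg.neg.neg)) = 1 := by
  by_contra hcon
  have hlast := w.v_eq_one_of_v_neg_neg_neg_ne_one hcon
  have hatoms := (w.v_iterAnd_eq_one_iff _ hn).1 hP2
  have hsteps := (w.v_iterAnd_eq_one_iff _ hn).1 hP3
  have hcons : ∀ i ∈ Finset.Icc 1 (n + 1), w.v (C1Formula.atom (A i)).cons = 1 := by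
    rintro (_ | _ | i) hi
    · simp at hi
    · exact hP1
    · have hi' : i + 1 ∈ Finset.Icc 1 n := by simp only [Finset.mem_Icc] at hi ⊢; omega
      exact w.v_mp (w.v_mp (hsteps _ hi') hlast) ((w.or_iff _ _).2 (.inl (hatoms _ hi')))
  have hneg_one := w.v_mp hP4 <| (w.v_iterAnd_eq_one_iff _ hn).2 fun i hi =>
    hcons i (by simp only [Finset.mem_Icc] at hi ⊢; omega)
  have hneg_zero :=
    w.v_neg_eq_zero_of_v_cons (hcons (n + 1) (Finset.right_mem_Icc.2 (by omega))) hlast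
  exact zero_ne_one (hneg_zero.symm.trans hneg_one)

/-- Validity of the fifth problem family Φ⁵: for every n ≥ 1 and pairwise
distinct atoms A₁, …, A_{n+1}, B₁, …, B_n, the sequent
∘A₁, ⋀_{i=1}^n A_i, ⋀_{i=1}^n [A_{n+1} → ((A_i ∨ B_i) → ∘A_{i+1})],
(⋀_{i=1}^n ∘A_i) → ¬A_{n+1} ⊢ ¬¬¬A_{n+1} is C1-valid. -/
theorem fifth_family_valid (n : ℕ) (hn : 1 ≤ n) (A B : ℕ → ℕ)
    (hA : ∀ i ∈ Finset.Icc 1 (n + 1), ∀ j ∈ Finset.Icc 1 (n + 1), i ≠ j → A i ≠ A j)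
    (hB : ∀ i ∈ Finset.Icc 1 n, ∀ j ∈ Finset.Icc 1 n, i ≠ j → B i ≠ B j)
    (hAB : ∀ i ∈ Finset.Icc 1 (n + 1), ∀ j ∈ Finset.Icc 1 n, A i ≠ B j)
    (w : C1Valuation)
    (hP1 : w.v ((C1Formula.atom (A 1)).cons) = 1)
    (hP2 : w.v (iterAnd (fun i => C1Formula.atom (A i)) n) = 1)
    (hP3 : w.v (iterAnd (fun i =>
        (C1Formula.atom (A (n + 1))).imp
          (((C1Formula.atom (A i)).or (C1Formula.atom (B i))).imp
            ((C1Formula.atom (A (i + 1))).cons))) n) = 1)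
    (hP4 : w.v ((iterAnd (fun i => (C1Formula.atom (A i)).cons) n).imp
        ((C1Formula.atom (A (n + 1))).neg)) = 1) :
    w.v (((C1Formula.atom (A (n + 1))).neg.neg.neg)) = 1 :=
  fifth_family_valid_general n hn A B w hP1 hP2 hP3 hP4
end
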